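/- Let L and L̂ be generators of diffusion processes with a common invariant probability measure μ and carré du champ operators Γ and Γ̂ respectively. Suppose f and g are functions with Lf = L̂g and ∫ Γ̂(f) dμ ≤ ∫ Γ(f) dμ. Then ∫ Γ(f) dμ ≤ ∫ Γ̂(g) dμ. -/
import Mathlib


open MeasureTheory

/-- Lemma: if `L f = L̂ g` and `∫ Γ̂(f) dμ ≤ ∫ Γ(f) dμ`, then `∫ Γ(f) dμ ≤ ∫ Γ̂(g) dμ`. -/
theorem stmt0 {α : Type*} [MeasurableSpace α] (μ : Measure α) [IsProbabilityMeasure μ]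
    (L Lhat : (α → ℝ) → (α → ℝ)) (Γ Γhat : (α → ℝ) → (α → ℝ) → (α → ℝ))
    (f g : α → ℝ)
    (hLfg : L f = Lhat g)
    (hIBP : ∫ x, f x * L f x ∂μ = ∫ x, Γ f f x ∂μ)
    (hIBPhat : ∫ x, f x * Lhat g x ∂μ = ∫ x, Γhat f g x ∂μ)
    (hCS : |∫ x, Γhat f g x ∂μ| ≤
      Real.sqrt (∫ x, Γhat f f x ∂μ) * Real.sqrt (∫ x, Γhat g g x ∂μ))
    (hΓhatf_nonneg : 0 ≤ ∫ x, Γhat f f x ∂μ)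
    (hΓhatg_nonneg : 0 ≤ ∫ x, Γhat g g x ∂μ)
    (hle : ∫ x, Γhat f f x ∂μ ≤ ∫ x, Γ f f x ∂μ)
    (hpos : 0 < ∫ x, Γ f f x ∂μ) :
    ∫ x, Γ f f x ∂μ ≤ ∫ x, Γhat g g x ∂μ := by
  set A := ∫ x, Γ f f x ∂μ
  set B := ∫ x, Γhat g g x ∂μ
  have hA : A = ∫ x, Γhat f g x ∂μ := by
    rw [← hIBP, ← hIBPhat, hLfg]
  have h1 : A ≤ Real.sqrt A * Real.sqrt B := by
    calc A ≤ |∫ x, Γhat f g x ∂μ| := by rw [hA]; exact le_abs_self _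
    _ ≤ Real.sqrt (∫ x, Γhat f f x ∂μ) * Real.sqrt B := hCS
    _ ≤ Real.sqrt A * Real.sqrt B := by
        exact mul_le_mul_of_nonneg_right (Real.sqrt_le_sqrt hle) (Real.sqrt_nonneg _)
  have hsA : 0 < Real.sqrt A := Real.sqrt_pos.mpr hpos
  have h2 : Real.sqrt A ≤ Real.sqrt B := by
    have := h1
    rw [← Real.sq_sqrt hpos.le] at this
    have : Real.sqrt A * Real.sqrt A ≤ Real.sqrt A * Real.sqrt B := by
      nlinarith [Real.sq_sqrt hpos.le]
    exact le_of_mul_le_mul_left this hsA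
  calc A = Real.sqrt A * Real.sqrt A := (Real.mul_self_sqrt hpos.le).symm
  _ ≤ Real.sqrt B * Real.sqrt B := mul_le_mul h2 h2 hsA.le (Real.sqrt_nonneg _)
  _ = B := Real.mul_self_sqrt hΓhatg_nonneg
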